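/- Let ≽ be a weak order on A^N satisfying separability and symmetry, and define a ≥* b iff a_i c ≽ b_i c for some i ∈ N and c ∈ A. Then ≥* is well-defined (independent of the choice of i and c) and is a weak order on A; moreover, if x_i ≥* y_i for all i ∈ N then x ≽ y, and if additionally x_i >* y_i for some i then x ≻ y. -/

import Mathlib

open Function

section Defs

variable {N A : Type*}

/-- Weak order: complete and transitive. -/
def WeakOrderRel (R : (N → A) → (N → A) → Prop) : Prop :=
  (∀ x y, R x y ∨ R y x) ∧ ∀ x y z, R x y → R y z → R x z

/-- The strict part of a relation. -/
def StrictRel (R : (N → A) → (N → A) → Prop) (x y : N → A) : Prop :=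
  R x y ∧ ¬ R y x

/-- Symmetry: any allocation is socially indifferent to any permutation of it. -/
def SymmetryAx (R : (N → A) → (N → A) → Prop) : Prop :=
  ∀ (σ : Equiv.Perm N) (x : N → A), R x (x ∘ σ) ∧ R (x ∘ σ) x

open Classical in
/-- `splice M x y` agrees with `x` on `M` and with `y` off `M`. -/
noncomputable def splice (M : Set N) (x y : N → A) : N → A :=
  fun i => if i ∈ M then x i else y i

/-- Separability. -/
def SeparabilityAx (R : (N → A) → (N → A) → Prop) : Prop :=
  ∀ (M : Set N) (x y x' y' : N → A),
    (R (splice M x y) (splice M x' y) ↔ R (splice M x y') (splice M x' y'))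

open Classical in
/-- `alloc i a b` gives `a` to agent `i` and `b` to everyone else. -/
noncomputable def alloc (i : N) (a b : A) : N → A :=
  Function.update (fun _ => b) i a

open Classical in
/-- `alloc2 i j a c b` gives `a` to `i`, `c` to `j`, and `b` to the rest. -/
noncomputable def alloc2 (i j : N) (a c b : A) : N → A :=
  Function.update (alloc i a b) j c

/-- Sufficientarian judgment. -/
def SuffJudgment (R : (N → A) → (N → A) → Prop) : Prop :=
  ∀ (a b c : A) (i j : N), i ≠ j →
    StrictRel R (fun _ => b) (alloc i a b) →
    R (alloc i a b) (alloc2 i j a c b)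

/-- Weak sufficientarian judgment. -/
def WeakSuffJudgment (R : (N → A) → (N → A) → Prop) : Prop :=
  ∀ (a b c : A) (i j : N), i ≠ j →
    StrictRel R (fun _ => b) (alloc i a b) →
    StrictRel R (fun _ => b) (alloc2 i j a c b)

/-- Sufficientarianism: comparisons count agents whose consumption is in a sufficient set. -/
def IsSufficientarian [Fintype N] (R : (N → A) → (N → A) → Prop) : Prop :=
  ∃ S : Set A, ∀ x y : N → A,
    R x y ↔ Nat.card {i : N // x i ∈ S} ≥ Nat.card {i : N // y i ∈ S}

end Defs

/-!
Separability makes the comparison of two allocations that differ only in agent `i`'s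
consumption independent of what everybody else gets, and symmetry makes it independent of
who `i` is. So `≽` restricted to one-agent changes is a single relation `≥*` on `A`, which
inherits completeness and transitivity from `≽`. If `x i ≥* y i` for every `i`, changing `y`
into `x` one coordinate at a time never goes down, so `x ≽ y`. If moreover `x i >* y i` and
`y ≽ x`, then lowering `x i` to `y i` in `x` gives an allocation still `≽ y ≽ x`, whence
`y i ≥* x i`.
-/

section InducedOrder

variable {N A : Type*} {R : (N → A) → (N → A) → Prop}

/-- The paper's `≥*` on consumption levels. -/
def AllocGE (R : (N → A) → (N → A) → Prop) (a b : A) : Prop :=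
  ∃ (i : N) (c : A), R (alloc i a c) (alloc i b c)

theorem WeakOrderRel.refl (hwo : WeakOrderRel R) (x : N → A) : R x x :=
  (hwo.1 x x).elim id id

theorem alloc_eq_update [DecidableEq N] (i : N) (a c : A) :
    alloc i a c = update (fun _ => c) i a := by
  unfold alloc
  congr
  exact Subsingleton.elim _ _

theorem alloc_comp_swap [DecidableEq N] (i j : N) (a c : A) :
    alloc j a c ∘ Equiv.swap i j = alloc i a c := by
  rw [alloc_eq_update, alloc_eq_update, update_comp_equiv, Equiv.symm_swap,
    Equiv.swap_apply_right]
  rfl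

theorem SeparabilityAx.update_iff [DecidableEq N] (hsep : SeparabilityAx R) (i : N)
    (a b : A) (w w' : N → A) :
    R (update w i a) (update w i b) ↔ R (update w' i a) (update w' i b) := by
  have splice_singleton (x y : N → A) : splice {i} x y = update y i (x i) := by
    funext j
    by_cases h : j = i <;> simp [splice, update, h]
  simpa only [splice_singleton] using hsep {i} (fun _ => a) w (fun _ => b) w'

theorem SymmetryAx.alloc_rel_of_alloc_rel (hwo : WeakOrderRel R) (hsym : SymmetryAx R)
    {i : N} (j : N) {a b c : A} (h : R (alloc i a c) (alloc i b c)) :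
    R (alloc j a c) (alloc j b c) := by
  classical
  have ha := (hsym (Equiv.swap i j) (alloc j a c)).1
  have hb := (hsym (Equiv.swap i j) (alloc j b c)).2
  rw [alloc_comp_swap] at ha hb
  exact hwo.2 _ _ _ (hwo.2 _ _ _ ha h) hb

theorem alloc_rel_iff (hwo : WeakOrderRel R) (hsym : SymmetryAx R) (hsep : SeparabilityAx R)
    (a b : A) (i i' : N) (c c' : A) :
    R (alloc i a c) (alloc i b c) ↔ R (alloc i' a c') (alloc i' b c') := by
  classical
  have change_filler (j : N) (d d' : A) :
      R (alloc j a d) (alloc j b d) ↔ R (alloc j a d') (alloc j b d') := by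
    simp only [alloc_eq_update]
    exact hsep.update_iff j a b _ _
  constructor
  · exact fun h => (change_filler i' c c').1 (hsym.alloc_rel_of_alloc_rel hwo i' h)
  · exact fun h => (change_filler i c' c).1 (hsym.alloc_rel_of_alloc_rel hwo i h)

variable (hwo : WeakOrderRel R) (hsym : SymmetryAx R) (hsep : SeparabilityAx R)
include hwo hsym hsep

theorem allocGE_iff {a b : A} (i : N) (c : A) :
    AllocGE R a b ↔ R (alloc i a c) (alloc i b c) :=
  ⟨fun ⟨_, _, h⟩ => (alloc_rel_iff hwo hsym hsep a b _ i _ c).1 h, fun h => ⟨i, c, h⟩⟩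

theorem allocGE_iff_update [DecidableEq N] {a b : A} (i : N) (w : N → A) :
    AllocGE R a b ↔ R (update w i a) (update w i b) := by
  rw [allocGE_iff hwo hsym hsep i a, alloc_eq_update, alloc_eq_update]
  exact hsep.update_iff i a b _ _

omit hsym hsep in
theorem allocGE_total [Nonempty N] (a b : A) : AllocGE R a b ∨ AllocGE R b a := by
  obtain ⟨i⟩ := ‹Nonempty N›
  exact (hwo.1 (alloc i a a) (alloc i b a)).imp (fun h => ⟨i, a, h⟩) fun h => ⟨i, a, h⟩

theorem allocGE_trans {a b c : A} (hab : AllocGE R a b) (hbc : AllocGE R b c) :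
    AllocGE R a c := by
  obtain ⟨i, d, hab⟩ := hab
  exact ⟨i, d, hwo.2 _ _ _ hab ((allocGE_iff hwo hsym hsep i d).1 hbc)⟩

theorem rel_of_forall_allocGE [Finite N] {x y : N → A} (h : ∀ i, AllocGE R (x i) (y i)) :
    R x y := by
  classical
  cases nonempty_fintype N
  suffices ∀ s : Finset N, R (s.piecewise x y) y by
    simpa only [Finset.piecewise_univ] using this Finset.univ
  intro s
  induction s using Finset.induction_on with
  | empty => simpa only [Finset.piecewise_empty] using hwo.refl y
  | @insert j s hj ih =>
    have hstep : R (update (s.piecewise x y) j (x j)) (s.piecewise x y) := by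
      conv_rhs => rw [← update_eq_self j (s.piecewise x y), s.piecewise_eq_of_notMem x y hj]
      exact (allocGE_iff_update hwo hsym hsep j _).1 (h j)
    rw [Finset.piecewise_insert]
    exact hwo.2 _ _ _ hstep ih

theorem strictRel_of_forall_allocGE [Finite N] {x y : N → A}
    (h : ∀ i, AllocGE R (x i) (y i)) {i : N} (hi : ¬ AllocGE R (y i) (x i)) :
    StrictRel R x y := by
  classical
  refine ⟨rel_of_forall_allocGE hwo hsym hsep h, fun hyx => hi ?_⟩
  have hlower : R (update x i (y i)) y := by
    refine rel_of_forall_allocGE hwo hsym hsep fun k => ?_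
    rw [update_apply]
    split_ifs with hk
    · exact ⟨k, y k, hk ▸ hwo.refl _⟩
    · exact h k
  rw [allocGE_iff_update hwo hsym hsep i x, update_eq_self]
  exact hwo.2 _ _ _ hlower hyx

end InducedOrder

theorem stmt19_general {N A : Type*} [Fintype N] (hN : 2 ≤ Fintype.card N)
    (R : (N → A) → (N → A) → Prop)
    (hwo : WeakOrderRel R) (hsym : SymmetryAx R) (hsep : SeparabilityAx R) :
    let ge : A → A → Prop := fun a b => ∃ (i : N) (c : A), R (alloc i a c) (alloc i b c)
    (∀ (a b : A) (i i' : N) (c c' : A),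
        R (alloc i a c) (alloc i b c) ↔ R (alloc i' a c') (alloc i' b c')) ∧
    (∀ a b : A, ge a b ∨ ge b a) ∧
    (∀ a b c : A, ge a b → ge b c → ge a c) ∧
    (∀ x y : N → A, (∀ i, ge (x i) (y i)) → R x y) ∧
    (∀ x y : N → A, (∀ i, ge (x i) (y i)) → (∃ i, ge (x i) (y i) ∧ ¬ ge (y i) (x i)) →
      StrictRel R x y) := by
  have : Nonempty N := Fintype.card_pos_iff.mp (by omega)
  exact ⟨alloc_rel_iff hwo hsym hsep,
    allocGE_total hwo,
    fun _ _ _ => allocGE_trans hwo hsym hsep,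
    fun _ _ => rel_of_forall_allocGE hwo hsym hsep,
    fun _ _ h ⟨_, _, hi⟩ => strictRel_of_forall_allocGE hwo hsym hsep h hi⟩

/-- under weak order, separability and symmetry, the induced relation
`a ≥* b iff a_i c ≽ b_i c for some i, c` is independent of the choice of `i` and `c`,
is a weak order on `A`, and the relation `≽` is monotone (strictly so) with respect
to it. -/
theorem stmt19 {N A : Type*} [Fintype N] (hN : 2 ≤ Fintype.card N) [Nonempty A]
    (R : (N → A) → (N → A) → Prop)
    (hwo : WeakOrderRel R) (hsym : SymmetryAx R) (hsep : SeparabilityAx R) :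
    let ge : A → A → Prop := fun a b => ∃ (i : N) (c : A), R (alloc i a c) (alloc i b c)
    (∀ (a b : A) (i i' : N) (c c' : A),
        R (alloc i a c) (alloc i b c) ↔ R (alloc i' a c') (alloc i' b c')) ∧
    (∀ a b : A, ge a b ∨ ge b a) ∧
    (∀ a b c : A, ge a b → ge b c → ge a c) ∧
    (∀ x y : N → A, (∀ i, ge (x i) (y i)) → R x y) ∧
    (∀ x y : N → A, (∀ i, ge (x i) (y i)) → (∃ i, ge (x i) (y i) ∧ ¬ ge (y i) (x i)) →
      StrictRel R x y) :=
  stmt19_general hN R hwo hsym hsep
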